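/- Let n ≥ 2 and 1 ≤ p ≤ n. There exists a constant ν₀ > 0, depending only on n and p, with the following property: for every λ ∈ 𝒫_p and every index j with λ_j < 0, one has F_j(λ) ≥ ν₀ (1 + ∑_{i=1}^n F_i(λ)). -/

import Mathlib

open Finset

/-- The cone `𝒫_p ⊆ ℝ^n`: every sum of `p` pairwise distinct components is positive. -/
def Pcone (n p : ℕ) : Set (Fin n → ℝ) :=
  {lam | ∀ S : Finset (Fin n), S.card = p → 0 < ∑ i ∈ S, lam i}

/-- `M_p^n(λ) = ∏_{|S| = p} ∑_{i ∈ S} λ_i`. -/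
def Mpn (n p : ℕ) (lam : Fin n → ℝ) : ℝ :=
  ∏ S ∈ Finset.univ.powersetCard p, ∑ i ∈ S, lam i

/-- `F(λ) = (M_p^n(λ))^{1/C(n,p)}`. -/
noncomputable def Fpn (n p : ℕ) (lam : Fin n → ℝ) : ℝ :=
  Mpn n p lam ^ ((n.choose p : ℝ)⁻¹)

/-- `F_i(λ) = ∂F/∂λ_i (λ)`. -/
noncomputable def Fi (n p : ℕ) (lam : Fin n → ℝ) (i : Fin n) : ℝ :=
  fderiv ℝ (Fpn n p) lam (Pi.single i 1)

/-!
Write `σ_S = ∑_{k ∈ S} λ_k` for `p`-sets `S`. On `𝒫_p` the product rule gives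
`F_i = F / C(n,p) · ∑_{S ∋ i} σ_S⁻¹`, and AM-GM applied to the numbers `σ_S⁻¹` gives
`F / C(n,p) · ∑_S σ_S⁻¹ ≥ 1`; since every `S` has `p ≥ 1` elements, `∑_i F_i ≥ 1`.
If `λ_j < 0`, trading a positive component of a `p`-set `S ∌ j` for `j` lowers `σ_S`, and this
exchange is at most `n`-to-one, so `∑_{S ∌ j} σ_S⁻¹ ≤ n ∑_{S ∋ j} σ_S⁻¹` and every
`F_i ≤ (n + 1) F_j`. Hence `1 + ∑_i F_i ≤ 2 ∑_i F_i ≤ 2 n (n + 1) F_j`.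
-/

theorem card_le_prod_rpow_inv_card_mul_sum_inv {α : Type*} {s : Finset α} (hs : s.Nonempty)
    {x : α → ℝ} (hx : ∀ a ∈ s, 0 < x a) :
    (#s : ℝ) ≤ (∏ a ∈ s, x a) ^ (#s : ℝ)⁻¹ * ∑ a ∈ s, (x a)⁻¹ := by
  have hcard : (0 : ℝ) < #s := by exact_mod_cast hs.card_pos
  have hG : 0 < (∏ a ∈ s, x a) ^ (#s : ℝ)⁻¹ := Real.rpow_pos_of_pos (prod_pos hx) _
  have hamgm := Real.geom_mean_le_arith_mean_weighted s (fun _ => (#s : ℝ)⁻¹) (fun a => (x a)⁻¹)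
    (fun _ _ => by positivity) (by rw [sum_const, nsmul_eq_mul, mul_inv_cancel₀ hcard.ne'])
    (fun a ha => (inv_pos.2 (hx a ha)).le)
  rw [Real.finsetProd_rpow s _ (fun a ha => (inv_pos.2 (hx a ha)).le), prod_inv_distrib,
    Real.inv_rpow (prod_pos hx).le, ← mul_sum] at hamgm
  rw [inv_le_iff_one_le_mul₀ hG, inv_mul_eq_div, div_mul_eq_mul_div, one_le_div hcard] at hamgm
  linarith

section Combinatorics

variable {ι : Type*} [DecidableEq ι]

theorem exists_exchange_sum_le {lam : ι → ℝ} {S : Finset ι} (hS : 0 < ∑ k ∈ S, lam k) {j : ι}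
    (hjS : j ∉ S) (hj : lam j < 0) :
    ∃ k ∈ S, (insert j (S.erase k)).card = S.card ∧ S = insert k ((insert j (S.erase k)).erase j) ∧
      ∑ m ∈ insert j (S.erase k), lam m ≤ ∑ m ∈ S, lam m := by
  obtain ⟨k, hkS, hk⟩ :=
    exists_lt_of_sum_lt (s := S) (f := fun _ => (0 : ℝ)) (g := lam) (by simpa using hS)
  have hj' : j ∉ S.erase k := fun h => hjS (mem_of_mem_erase h)
  refine ⟨k, hkS, ?_, ?_, ?_⟩
  · rw [card_insert_of_notMem hj', card_erase_add_one hkS]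
  · rw [erase_insert hj', insert_erase hkS]
  · rw [sum_insert hj', ← sum_erase_add S lam hkS]
    linarith

variable [Fintype ι] {p : ℕ}

theorem sum_sum_filter_mem_powersetCard {M : Type*} [AddCommMonoid M] (f : Finset ι → M) :
    ∑ i, ∑ S ∈ powersetCard p univ with i ∈ S, f S = p • ∑ S ∈ powersetCard p univ, f S := by
  simp_rw [sum_filter, sum_comm (s := univ), sum_ite_mem, univ_inter, sum_const, smul_sum]
  exact sum_congr rfl fun S hS => by rw [mem_powersetCard_univ.1 hS]

theorem sum_inv_filter_notMem_le {lam : ι → ℝ}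
    (hlam : ∀ S : Finset ι, S.card = p → 0 < ∑ k ∈ S, lam k) {j : ι} (hj : lam j < 0) :
    ∑ S ∈ powersetCard p univ with j ∉ S, (∑ k ∈ S, lam k)⁻¹ ≤
      Fintype.card ι * ∑ T ∈ powersetCard p univ with j ∈ T, (∑ k ∈ T, lam k)⁻¹ := by
  have hex : ∀ S ∈ powersetCard p (univ : Finset ι), j ∉ S → ∃ k ∈ S,
      (insert j (S.erase k)).card = S.card ∧ S = insert k ((insert j (S.erase k)).erase j) ∧
      ∑ m ∈ insert j (S.erase k), lam m ≤ ∑ m ∈ S, lam m := fun S hS hjS =>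
    exists_exchange_sum_le (hlam S (mem_powersetCard_univ.1 hS)) hjS hj
  have : Nonempty ι := ⟨j⟩
  choose! k _ hcard hinv hle using hex
  -- `S` is recovered from `(k S, φ S)`, so `φ` is at most `card ι`-to-one.
  set φ : Finset ι → ι × Finset ι := fun S => (k S, insert j (S.erase (k S)))
  have hφ : ∀ S ∈ {S ∈ powersetCard p (univ : Finset ι) | j ∉ S},
      φ S ∈ (univ : Finset ι) ×ˢ {T ∈ powersetCard p (univ : Finset ι) | j ∈ T} := fun S hS => by
    obtain ⟨hSp, hjS⟩ := mem_filter.1 hS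
    simp [φ, hcard S hSp hjS, mem_powersetCard_univ.1 hSp]
  have hpos : ∀ x ∈ (univ : Finset ι) ×ˢ {T ∈ powersetCard p (univ : Finset ι) | j ∈ T},
      0 < ∑ m ∈ x.2, lam m := fun x hx =>
    hlam _ (mem_powersetCard_univ.1 (mem_filter.1 (mem_product.1 hx).2).1)
  calc ∑ S ∈ powersetCard p univ with j ∉ S, (∑ k ∈ S, lam k)⁻¹
      ≤ ∑ S ∈ powersetCard p univ with j ∉ S, (∑ m ∈ (φ S).2, lam m)⁻¹ :=
        sum_le_sum fun S hS =>
          inv_anti₀ (hpos _ (hφ S hS)) (hle S (mem_filter.1 hS).1 (mem_filter.1 hS).2)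
    _ = ∑ x ∈ image φ {S ∈ powersetCard p (univ : Finset ι) | j ∉ S}, (∑ m ∈ x.2, lam m)⁻¹ := by
        rw [sum_image]
        intro S hS S' hS' h
        obtain ⟨hSp, hjS⟩ := mem_filter.1 hS
        obtain ⟨hSp', hjS'⟩ := mem_filter.1 hS'
        rw [hinv S hSp hjS, hinv S' hSp' hjS']
        exact congrArg₂ (fun a T => insert a (erase T j)) (Prod.ext_iff.1 h).1 (Prod.ext_iff.1 h).2
    _ ≤ ∑ x ∈ (univ : Finset ι) ×ˢ {T ∈ powersetCard p (univ : Finset ι) | j ∈ T},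
          (∑ m ∈ x.2, lam m)⁻¹ :=
        sum_le_sum_of_subset_of_nonneg (image_subset_iff.2 hφ) fun x hx _ =>
          (inv_pos.2 (hpos x hx)).le
    _ = _ := by simp only [sum_product, sum_const, card_univ, nsmul_eq_mul]

theorem sum_inv_filter_mem_le {lam : ι → ℝ}
    (hlam : ∀ S : Finset ι, S.card = p → 0 < ∑ k ∈ S, lam k) {j : ι} (hj : lam j < 0) (i : ι) :
    ∑ S ∈ powersetCard p univ with i ∈ S, (∑ k ∈ S, lam k)⁻¹ ≤
      (Fintype.card ι + 1) * ∑ T ∈ powersetCard p univ with j ∈ T, (∑ k ∈ T, lam k)⁻¹ := by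
  have hnonneg : ∀ S ∈ powersetCard p univ, 0 ≤ (∑ k ∈ S, lam k)⁻¹ :=
    fun S hS => (inv_pos.2 (hlam S (mem_powersetCard_univ.1 hS))).le
  calc ∑ S ∈ powersetCard p univ with i ∈ S, (∑ k ∈ S, lam k)⁻¹
      ≤ ∑ S ∈ powersetCard p univ, (∑ k ∈ S, lam k)⁻¹ :=
        sum_le_sum_of_subset_of_nonneg (filter_subset _ _) fun S hS _ => hnonneg S hS
    _ = ∑ T ∈ powersetCard p univ with j ∈ T, (∑ k ∈ T, lam k)⁻¹ +
          ∑ S ∈ powersetCard p univ with j ∉ S, (∑ k ∈ S, lam k)⁻¹ :=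
        (sum_filter_add_sum_filter_not _ _ _).symm
    _ ≤ _ := by linarith [sum_inv_filter_notMem_le hlam hj]

end Combinatorics

theorem Mpn_pos_of_mem_Pcone {n p : ℕ} {lam : Fin n → ℝ} (hlam : lam ∈ Pcone n p) :
    0 < Mpn n p lam :=
  prod_pos fun S hS => hlam S (mem_powersetCard_univ.1 hS)

theorem hasFDerivAt_Mpn (n p : ℕ) (lam : Fin n → ℝ) :
    HasFDerivAt (Mpn n p)
      (∑ S ∈ powersetCard p univ, (∏ T ∈ (powersetCard p univ).erase S, ∑ k ∈ T, lam k) •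
        ∑ i ∈ S, ContinuousLinearMap.proj (R := ℝ) (φ := fun _ : Fin n => ℝ) i) lam :=
  HasFDerivAt.finsetProd fun _ _ =>
    HasFDerivAt.fun_sum fun i _ => hasFDerivAt_apply i lam

theorem Fi_eq_of_mem_Pcone {n p : ℕ} {lam : Fin n → ℝ} (hlam : lam ∈ Pcone n p) (i : Fin n) :
    Fi n p lam i = Fpn n p lam / n.choose p *
      ∑ S ∈ powersetCard p univ with i ∈ S, (∑ k ∈ S, lam k)⁻¹ := by
  have hσ : ∀ S ∈ powersetCard p univ, 0 < ∑ k ∈ S, lam k :=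
    fun S hS => hlam S (mem_powersetCard_univ.1 hS)
  have hM := Mpn_pos_of_mem_Pcone hlam
  have hF : HasFDerivAt (Fpn n p) _ lam :=
    (hasFDerivAt_Mpn n p lam).rpow_const (Or.inl hM.ne')
  rw [Fi, hF.fderiv]
  simp only [FunLike.coe_smul, FunLike.coe_sum, Pi.smul_apply,
    Finset.sum_apply, ContinuousLinearMap.proj_apply, smul_eq_mul,
    sum_pi_single', sum_filter, mul_sum]
  refine sum_congr rfl fun S hS => ?_
  have hQ : ∏ T ∈ (powersetCard p univ).erase S, ∑ k ∈ T, lam k = Mpn n p lam / ∑ k ∈ S, lam k :=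
    eq_div_of_mul_eq (hσ S hS).ne' (prod_erase_mul _ _ hS)
  split_ifs
  · rw [hQ, Fpn, Real.rpow_sub_one hM.ne']
    field_simp
  · simp

theorem one_le_sum_Fi {n p : ℕ} (hp1 : 1 ≤ p) (hpn : p ≤ n) {lam : Fin n → ℝ}
    (hlam : lam ∈ Pcone n p) : 1 ≤ ∑ i, Fi n p lam i := by
  have hσ : ∀ S ∈ powersetCard p univ, 0 < ∑ k ∈ S, lam k :=
    fun S hS => hlam S (mem_powersetCard_univ.1 hS)
  have hN : (0 : ℝ) < n.choose p := by exact_mod_cast Nat.choose_pos hpn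
  have hamgm := card_le_prod_rpow_inv_card_mul_sum_inv
    (powersetCard_nonempty.2 (by simpa using hpn)) hσ
  rw [card_powersetCard, card_univ, Fintype.card_fin] at hamgm
  change (n.choose p : ℝ) ≤ Fpn n p lam * _ at hamgm
  simp_rw [Fi_eq_of_mem_Pcone hlam, ← mul_sum, sum_sum_filter_mem_powersetCard, nsmul_eq_mul,
    div_mul_eq_mul_div, le_div_iff₀ hN]
  have hp : (1 : ℝ) ≤ p := by exact_mod_cast hp1
  nlinarith

theorem sum_Fi_le {n p : ℕ} {lam : Fin n → ℝ} (hlam : lam ∈ Pcone n p) {j : Fin n}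
    (hj : lam j < 0) : ∑ i, Fi n p lam i ≤ n * (n + 1) * Fi n p lam j := by
  have hc : 0 ≤ Fpn n p lam / n.choose p :=
    div_nonneg (Real.rpow_nonneg (Mpn_pos_of_mem_Pcone hlam).le _) (Nat.cast_nonneg _)
  simp_rw [Fi_eq_of_mem_Pcone hlam, ← mul_sum]
  calc _ ≤ Fpn n p lam / n.choose p *
        ∑ _i : Fin n, (n + 1) * ∑ T ∈ powersetCard p univ with j ∈ T, (∑ k ∈ T, lam k)⁻¹ := by
        gcongr with i
        simpa using sum_inv_filter_mem_le hlam hj i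
    _ = _ := by simp only [sum_const, card_univ, Fintype.card_fin, nsmul_eq_mul]; ring

theorem Fi_neg_component_lower_bound_general (n p : ℕ) (hp1 : 1 ≤ p) (hpn : p ≤ n) :
    ∃ ν₀ : ℝ, 0 < ν₀ ∧
      ∀ lam ∈ Pcone n p, ∀ j : Fin n, lam j < 0 →
        ν₀ * (1 + ∑ i, Fi n p lam i) ≤ Fi n p lam j := by
  refine ⟨(2 * (n + 1) ^ 2 : ℝ)⁻¹, by positivity, fun lam hlam j hj => ?_⟩
  have h1 := one_le_sum_Fi hp1 hpn hlam
  have h2 := sum_Fi_le hlam hj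
  have hFj : 0 < Fi n p lam j :=
    pos_of_mul_pos_right (a := (n : ℝ) * (n + 1)) (by linarith) (by positivity)
  rw [inv_mul_le_iff₀ (by positivity)]
  calc 1 + ∑ i, Fi n p lam i ≤ 2 * (n * (n + 1) * Fi n p lam j) := by linarith
    _ ≤ 2 * (n + 1) ^ 2 * Fi n p lam j := by nlinarith

/-- There exists `ν₀ > 0` depending only on `n` and `p` such that for every
`λ ∈ 𝒫_p` and every index `j` with `λ_j < 0` one has `F_j(λ) ≥ ν₀ (1 + ∑_i F_i(λ))`. -/
theorem Fi_neg_component_lower_bound (n p : ℕ) (hn : 2 ≤ n) (hp1 : 1 ≤ p) (hpn : p ≤ n) :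
    ∃ ν₀ : ℝ, 0 < ν₀ ∧
      ∀ lam ∈ Pcone n p, ∀ j : Fin n, lam j < 0 →
        ν₀ * (1 + ∑ i, Fi n p lam i) ≤ Fi n p lam j :=
  Fi_neg_component_lower_bound_general n p hp1 hpn
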